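/- Let G = (V, E) be a directed acyclic graph and let s, t ∈ V be such that every node v ∈ V lies on some s-t-path (i.e., there exist an s-v-path and a v-t-path in G). Then a set S ⊆ E is an identifying set for X^path_{G,s,t} if and only if there do not exist nodes v, w ∈ V together with two distinct internally node-disjoint v-w-paths in the subgraph (V, E \ S). -/

import Mathlib

/-- The list of consecutive arcs of a list of vertices. -/
def arcsOf {V : Type*} (l : List V) : List (V × V) := l.zip l.tail

/-- `l` is (the vertex list of) a simple directed path from `u` to `v`
using only arcs from `A`. -/
def IsPathOn {V : Type*} (A : Set (V × V)) (u v : V) (l : List V) : Prop :=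
  l.Nodup ∧ l.head? = some u ∧ l.getLast? = some v ∧ ∀ p ∈ arcsOf l, p ∈ A

/-- The incidence vector of (the arc set of) a path given by vertex list `l`. -/
def pathVec {V : Type*} [DecidableEq V] (l : List V) : (V × V) → ℝ :=
  fun p => if p ∈ arcsOf l then 1 else 0

/-- `X^path`: the set of incidence vectors of simple `s`-`t`-paths in the digraph
with arc set `A`. -/
def XPath {V : Type*} [DecidableEq V] (A : Set (V × V)) (s t : V) :
    Set ((V × V) → ℝ) :=
  {x | ∃ l : List V, IsPathOn A s t l ∧ x = pathVec l}

/-- `X^flow`: the set of nonnegative `s`-`t`-flows of value 1 in the digraph with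
arc set `A` (flows vanish outside `A`, and every node has the appropriate excess). -/
def XFlow {V : Type*} [Fintype V] [DecidableEq V] (A : Set (V × V)) (s t : V) :
    Set ((V × V) → ℝ) :=
  {x | (∀ p, 0 ≤ x p) ∧ (∀ p, p ∉ A → x p = 0) ∧
    ∀ v, (∑ w, x (v, w)) - (∑ u, x (u, v)) =
      if v = s then 1 else if v = t then -1 else 0}

/-- `S` is identifying for `X`: any two distinct members of `X` differ on some arc in `S`. -/
def Identifying {V : Type*} (X : Set ((V × V) → ℝ)) (S : Set (V × V)) : Prop :=
  ∀ x ∈ X, ∀ y ∈ X, x ≠ y → ∃ e ∈ S, x e ≠ y e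

/-- The digraph with arc set `A` is acyclic: it has no directed cycle. -/
def IsAcyclicDigraph {V : Type*} (A : Set (V × V)) : Prop :=
  ¬ ∃ (a : V) (l : List V), (a :: l).Nodup ∧
      ∀ p ∈ arcsOf (a :: (l ++ [a])), p ∈ A

/-! If two distinct `v`-`w`-paths avoid `S`, splice each of them between the part of an
`s`-`t`-path before `v` and the part of an `s`-`t`-path after `w`: acyclicity makes both splices
simple, and their incidence vectors differ (a simple path is determined by its first vertex and
its arc set) although they agree on `S`.

Conversely, let two distinct `s`-`t`-paths agree on `S`. They share a longest common prefix,
ending at `v`; let `w` be the first vertex after `v` on the first path that also lies on the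
second. Acyclicity forces the common vertices to occur in the same order on both paths, so the
two `v`-`w`-segments are internally disjoint, and an arc of `S` on one segment would also have
to lie on the other path, which the choice of `v` and `w` rules out. -/

open Relation

section Arcs
variable {V : Type*}

@[simp] theorem arcsOf_nil : arcsOf ([] : List V) = [] := rfl

@[simp] theorem arcsOf_singleton (a : V) : arcsOf [a] = [] := rfl

@[simp] theorem arcsOf_cons_cons (a b : V) (l : List V) :
    arcsOf (a :: b :: l) = (a, b) :: arcsOf (b :: l) := rfl

theorem mem_arcsOf {l : List V} {u v : V} : (u, v) ∈ arcsOf l ↔ [u, v] <:+: l := by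
  induction l with
  | nil => simp
  | cons a l ih =>
    cases l with
    | nil => simp [List.infix_cons_iff]
    | cons b l => simp [List.infix_cons_iff, ih, and_comm]

theorem arcsOf_subset {l₁ l₂ : List V} (h : l₁ <:+: l₂) : arcsOf l₁ ⊆ arcsOf l₂ := by
  rintro ⟨u, v⟩ he
  exact mem_arcsOf.2 ((mem_arcsOf.1 he).trans h)

theorem fst_mem_of_mem_arcsOf {l : List V} {e : V × V} (h : e ∈ arcsOf l) : e.1 ∈ l :=
  (List.of_mem_zip h).1

theorem fst_mem_of_mem_arcsOf_concat {l : List V} {w u u' : V}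
    (h : (u, u') ∈ arcsOf (l ++ [w])) : u ∈ l := by
  rcases List.infix_concat_iff.1 (mem_arcsOf.1 h) with h | h
  · obtain ⟨p, hp⟩ := h
    have hl : p ++ [u] = l := by
      simpa [List.dropLast_append_of_ne_nil] using congrArg List.dropLast hp
    simp [← hl]
  · exact h.subset (by simp)

theorem arcsOf_append_cons (l₁ : List V) (a : V) (l₂ : List V) :
    arcsOf (l₁ ++ a :: l₂) = arcsOf (l₁ ++ [a]) ++ arcsOf (a :: l₂) := by
  induction l₁ with
  | nil => simp
  | cons x l₁ ih => cases l₁ <;> simp_all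

theorem arcsOf_append_append {c l d : List V} {v w : V} (hv : l.head? = some v)
    (hw : l.getLast? = some w) :
    arcsOf (c ++ l ++ d) = arcsOf (c ++ [v]) ++ arcsOf l ++ arcsOf (w :: d) := by
  obtain ⟨l', rfl⟩ := List.head?_eq_some_iff.1 hv
  obtain ⟨l'', hl''⟩ := List.getLast?_eq_some_iff.1 hw
  calc arcsOf (c ++ v :: l' ++ d) = arcsOf (c ++ [v]) ++ arcsOf (v :: l' ++ d) := by
        rw [List.append_assoc, List.cons_append, arcsOf_append_cons]
    _ = _ := by
        rw [hl'', List.append_assoc, List.singleton_append, arcsOf_append_cons l'' w d,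
          List.append_assoc]

theorem head?_eq_some_iff_mem_arcsOf {r : List V} {v x : V} (hv : v ∉ r) :
    r.head? = some x ↔ (v, x) ∈ arcsOf (v :: r) := by
  cases r with
  | nil => simp
  | cons y r =>
    rw [arcsOf_cons_cons, List.mem_cons]
    refine ⟨by simp_all, fun h => ?_⟩
    rcases h with h | h
    · simp_all
    · exact absurd (fst_mem_of_mem_arcsOf h) hv

theorem head?_eq_of_mem_arcsOf {c r : List V} {v x : V} (hnd : (c ++ v :: r).Nodup)
    (h : (v, x) ∈ arcsOf (c ++ v :: r)) : r.head? = some x := by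
  rw [arcsOf_append_cons, List.mem_append] at h
  rcases h with h | h
  · exact absurd (fst_mem_of_mem_arcsOf_concat h) (List.disjoint_of_nodup_append hnd · (by simp))
  · exact (head?_eq_some_iff_mem_arcsOf (List.nodup_cons.1 (hnd.sublist (by simp))).1).2 h

theorem mem_arcsOf_iff_of_notMem {l : List V} {a : V} {e : V × V} (ha : a ∉ l) :
    e ∈ arcsOf l ↔ e ∈ arcsOf (a :: l) ∧ e.1 ≠ a := by
  refine ⟨fun h => ⟨arcsOf_subset (List.suffix_cons a l).isInfix h,
    fun h' => ha (h' ▸ fst_mem_of_mem_arcsOf h)⟩, fun ⟨h, hne⟩ => ?_⟩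
  cases l with
  | nil => simp at h
  | cons y l =>
    rw [arcsOf_cons_cons, List.mem_cons] at h
    exact h.resolve_left (by rintro rfl; exact hne rfl)

theorem eq_of_forall_mem_arcsOf_iff {l₁ l₂ : List V} (hnd₁ : l₁.Nodup) (hnd₂ : l₂.Nodup)
    (hhead : l₁.head? = l₂.head?) (harcs : ∀ e, e ∈ arcsOf l₁ ↔ e ∈ arcsOf l₂) : l₁ = l₂ := by
  induction l₁ generalizing l₂ with
  | nil => exact (List.head?_eq_none_iff.1 hhead.symm).symm
  | cons a r₁ ih =>
    obtain ⟨r₂, rfl⟩ := List.head?_eq_some_iff.1 hhead.symm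
    rw [List.nodup_cons] at hnd₁ hnd₂
    have hhead' : r₁.head? = r₂.head? := Option.ext fun x => by
      rw [head?_eq_some_iff_mem_arcsOf hnd₁.1, head?_eq_some_iff_mem_arcsOf hnd₂.1, harcs]
    have harcs' : ∀ e, e ∈ arcsOf r₁ ↔ e ∈ arcsOf r₂ := fun e => by
      rw [mem_arcsOf_iff_of_notMem hnd₁.1, mem_arcsOf_iff_of_notMem hnd₂.1, harcs]
    rw [ih hnd₁.2 hnd₂.2 hhead' harcs']

theorem exists_common_prefix_of_ne {l₁ l₂ : List V} (hne : l₁ ≠ l₂)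
    (hhead : l₁.head? = l₂.head?) :
    ∃ c v r₁ r₂, l₁ = c ++ v :: r₁ ∧ l₂ = c ++ v :: r₂ ∧ r₁.head? ≠ r₂.head? := by
  induction l₁ generalizing l₂ with
  | nil => exact absurd (List.head?_eq_none_iff.1 hhead.symm).symm hne
  | cons a r₁ ih =>
    obtain ⟨r₂, rfl⟩ := List.head?_eq_some_iff.1 hhead.symm
    by_cases hr : r₁.head? = r₂.head?
    · obtain ⟨c, v, r₁', r₂', rfl, rfl, hdiv⟩ := ih (fun h => hne (h ▸ rfl)) hr
      exact ⟨a :: c, v, r₁', r₂', rfl, rfl, hdiv⟩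
    · exact ⟨[], a, r₁, r₂, rfl, rfl, hr⟩

theorem exists_first_mem [DecidableEq V] {l m : List V} (h : ∃ x ∈ l, x ∈ m) :
    ∃ p w q, l = p ++ w :: q ∧ w ∈ m ∧ ∀ y ∈ p, y ∉ m := by
  obtain ⟨w, hw⟩ := Option.isSome_iff_exists.1 (List.find?_isSome (p := (· ∈ m)).2 (by simpa))
  obtain ⟨hwm, p, q, rfl, hp⟩ := List.find?_eq_some_iff_append.1 hw
  exact ⟨p, w, q, rfl, by simpa using hwm, by simpa using hp⟩

theorem mem_of_getLast?_append_cons {c r : List V} {v t : V}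
    (h : (c ++ v :: r).getLast? = some t) (hr : r ≠ []) : t ∈ r := by
  rw [show c ++ v :: r = c ++ [v] ++ r by simp, List.getLast?_append_of_ne_nil _ hr] at h
  exact List.mem_of_getLast? h

theorem mem_of_getLast?_eq_of_head?_ne {c r₁ r₂ : List V} {v t : V}
    (h₁ : (c ++ v :: r₁).getLast? = some t) (h₂ : (c ++ v :: r₂).getLast? = some t)
    (hv : v ∉ r₂) (hdiv : r₁.head? ≠ r₂.head?) : t ∈ r₁ := by
  by_cases hr₁ : r₁ = []
  · subst hr₁
    obtain rfl : v = t := by simpa using h₁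
    exact absurd (mem_of_getLast?_append_cons h₂ fun hr₂ => hdiv (by simp [hr₂])) hv
  · exact mem_of_getLast?_append_cons h₁ hr₁

end Arcs

theorem pathVec_apply_eq_iff {V : Type*} [DecidableEq V] {l₁ l₂ : List V} {e : V × V} :
    pathVec l₁ e = pathVec l₂ e ↔ (e ∈ arcsOf l₁ ↔ e ∈ arcsOf l₂) := by
  unfold pathVec
  split_ifs <;> simp_all

section Reach
variable {V : Type*} {A : Set (V × V)}

def Reaches (A : Set (V × V)) : V → V → Prop := ReflTransGen fun u v => (u, v) ∈ A

theorem IsPathOn.mono {B : Set (V × V)} {u v : V} {l : List V} (h : IsPathOn A u v l)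
    (hAB : A ⊆ B) : IsPathOn B u v l :=
  ⟨h.1, h.2.1, h.2.2.1, fun e he => hAB (h.2.2.2 e he)⟩

theorem reaches_of_head?_eq {l : List V} {x y : V} (harcs : ∀ e ∈ arcsOf l, e ∈ A)
    (hx : l.head? = some x) (hy : y ∈ l) : Reaches A x y := by
  induction l generalizing x with
  | nil => simp at hy
  | cons a r ih =>
    obtain rfl : a = x := by simpa using hx
    rcases List.mem_cons.1 hy with rfl | hy
    · exact .refl
    cases r with
    | nil => simp at hy
    | cons b r =>
      rw [arcsOf_cons_cons] at harcs
      exact .head (harcs _ List.mem_cons_self) (ih (fun e he => harcs e (.tail _ he)) rfl hy)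

theorem reaches_of_getLast?_eq {l : List V} {x y : V} (harcs : ∀ e ∈ arcsOf l, e ∈ A)
    (hy : l.getLast? = some y) (hx : x ∈ l) : Reaches A x y := by
  induction l generalizing x with
  | nil => simp at hx
  | cons a r ih =>
    cases r with
    | nil => simp_all [Reaches, ReflTransGen.refl]
    | cons b r =>
      rw [arcsOf_cons_cons] at harcs
      have ih' : ∀ {z}, z ∈ b :: r → Reaches A z y :=
        ih (fun e he => harcs e (.tail _ he)) (by simpa using hy)
      rcases List.mem_cons.1 hx with rfl | hx
      · exact .head (harcs _ List.mem_cons_self) (ih' List.mem_cons_self)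
      · exact ih' hx

theorem exists_isPathOn_of_reaches {u v : V} (h : Reaches A u v) : ∃ l, IsPathOn A u v l := by
  induction h using ReflTransGen.head_induction_on with
  | refl => exact ⟨[v], by simp [IsPathOn]⟩
  | @head a b hab _ ih =>
    obtain ⟨l, hnd, hb, hv, harcs⟩ := ih
    by_cases ha : a ∈ l
    · obtain ⟨p, q, rfl⟩ := List.append_of_mem ha
      refine ⟨a :: q, hnd.sublist (by simp), rfl, ?_, fun e he => harcs e ?_⟩
      · rwa [List.getLast?_append_of_ne_nil _ (List.cons_ne_nil _ _)] at hv
      · exact arcsOf_subset (List.suffix_append p _).isInfix he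
    · obtain ⟨r, rfl⟩ := List.head?_eq_some_iff.1 hb
      refine ⟨a :: b :: r, List.nodup_cons.2 ⟨ha, hnd⟩, rfl, by simpa using hv, ?_⟩
      rw [arcsOf_cons_cons]
      rintro e (_ | ⟨_, he⟩)
      exacts [hab, harcs e he]

theorem IsAcyclicDigraph.eq_of_reaches (hA : IsAcyclicDigraph A) {u v : V}
    (huv : Reaches A u v) (hvu : Reaches A v u) : u = v := by
  by_contra hne
  have hcyc : TransGen (fun x y => (x, y) ∈ A) u u :=
    ((reflTransGen_iff_eq_or_transGen.1 huv).resolve_left (Ne.symm hne)).trans_left hvu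
  obtain ⟨b, hub, hbu⟩ := TransGen.head'_iff.1 hcyc
  obtain ⟨l, hnd, hb, hu, harcs⟩ := exists_isPathOn_of_reaches hbu
  obtain ⟨q, rfl⟩ := List.getLast?_eq_some_iff.1 hu
  refine hA ⟨u, q, List.nodup_cons.2 ⟨fun h => List.disjoint_of_nodup_append hnd h
    (List.mem_singleton_self u), hnd.of_append_left⟩, ?_⟩
  obtain ⟨r, hr⟩ := List.head?_eq_some_iff.1 hb
  rw [hr, arcsOf_cons_cons]
  rintro e (_ | ⟨_, he⟩)
  exacts [hub, harcs e (hr ▸ he)]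

end Reach

section Paths
variable {V : Type*} {A S : Set (V × V)} {s t : V}

theorem IsAcyclicDigraph.isPathOn_splice (hA : IsAcyclicDigraph A)
    {c d c' d' P : List V} {s t₁ s₂ t v w : V}
    (h₁ : IsPathOn A s t₁ (c ++ v :: d)) (h₂ : IsPathOn A s₂ t (c' ++ w :: d'))
    (hP : IsPathOn A v w P) : IsPathOn A s t (c ++ P ++ d') := by
  obtain ⟨hnd₁, hs, -, harcs₁⟩ := h₁
  obtain ⟨hnd₂, -, ht, harcs₂⟩ := h₂
  obtain ⟨hndP, hv, hw, harcsP⟩ := hP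
  have harcs_c : ∀ e ∈ arcsOf (c ++ [v]), e ∈ A := fun e he =>
    harcs₁ e (by simpa using arcsOf_subset (List.prefix_append _ d).isInfix he)
  have harcs_d : ∀ e ∈ arcsOf (w :: d'), e ∈ A := fun e he =>
    harcs₂ e (arcsOf_subset (List.suffix_append c' _).isInfix he)
  have hc : ∀ x ∈ c, Reaches A x v ∧ x ≠ v := fun x hx =>
    ⟨reaches_of_getLast?_eq harcs_c List.getLast?_concat (List.mem_append_left _ hx),
      by rintro rfl; exact List.disjoint_of_nodup_append hnd₁ hx List.mem_cons_self⟩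
  have hd : ∀ x ∈ d', Reaches A w x ∧ x ≠ w := fun x hx =>
    ⟨reaches_of_head?_eq harcs_d rfl (List.mem_cons_of_mem _ hx),
      by rintro rfl; exact (List.nodup_cons.1 (hnd₂.sublist (List.sublist_append_right _ _))).1 hx⟩
  have hPr : ∀ x ∈ P, Reaches A v x ∧ Reaches A x w := fun x hx =>
    ⟨reaches_of_head?_eq harcsP hv hx, reaches_of_getLast?_eq harcsP hw hx⟩
  refine ⟨?_, ?_, ?_, ?_⟩
  · refine List.nodup_append.2 ⟨List.nodup_append.2 ⟨hnd₁.of_append_left, hndP, ?_⟩,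
      (hnd₂.sublist (List.sublist_append_right _ _)).of_cons, ?_⟩
    · rintro x hxc _ hxP rfl
      exact (hc x hxc).2 (hA.eq_of_reaches (hc x hxc).1 (hPr x hxP).1)
    · rintro x hx y hyd rfl
      refine (hd x hyd).2 (hA.eq_of_reaches ?_ (hd x hyd).1)
      rcases List.mem_append.1 hx with hxc | hxP
      exacts [(hc x hxc).1.trans (hPr w (List.mem_of_getLast? hw)).1, (hPr x hxP).2]
  · obtain ⟨P', rfl⟩ := List.head?_eq_some_iff.1 hv
    rw [← hs]
    cases c <;> simp
  · obtain ⟨P', rfl⟩ := List.getLast?_eq_some_iff.1 hw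
    rw [← ht, show c ++ (P' ++ [w]) ++ d' = c ++ P' ++ w :: d' by simp,
      List.getLast?_append_of_ne_nil _ (List.cons_ne_nil _ _),
      List.getLast?_append_of_ne_nil _ (List.cons_ne_nil _ _)]
  · rw [arcsOf_append_append hv hw]
    simp only [List.mem_append]
    rintro e ((he | he) | he)
    exacts [harcs_c e he, harcsP e he, harcs_d e he]

theorem IsAcyclicDigraph.not_identifying_of_isPathOn_sdiff [DecidableEq V]
    (hA : IsAcyclicDigraph A)
    (hcover : ∀ x : V, ∃ l, IsPathOn A s t l ∧ x ∈ l) {v w : V} {P₁ P₂ : List V}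
    (h₁ : IsPathOn (A \ S) v w P₁) (h₂ : IsPathOn (A \ S) v w P₂) (hne : P₁ ≠ P₂) :
    ¬ Identifying (XPath A s t) S := by
  intro hid
  obtain ⟨L, hL, hvL⟩ := hcover v
  obtain ⟨L', hL', hwL'⟩ := hcover w
  obtain ⟨c, d, rfl⟩ := List.append_of_mem hvL
  obtain ⟨c', d', rfl⟩ := List.append_of_mem hwL'
  have hQ : ∀ {P}, IsPathOn (A \ S) v w P → IsPathOn A s t (c ++ P ++ d') := fun hP =>
    hA.isPathOn_splice hL hL' (hP.mono Set.sdiff_subset)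
  have harcs : ∀ {P}, IsPathOn (A \ S) v w P →
      arcsOf (c ++ P ++ d') = arcsOf (c ++ [v]) ++ arcsOf P ++ arcsOf (w :: d') := fun hP =>
    arcsOf_append_append hP.2.1 hP.2.2.1
  obtain ⟨e, heS, hdiff⟩ := hid _ ⟨_, hQ h₁, rfl⟩ _ ⟨_, hQ h₂, rfl⟩ fun h => hne <|
    List.append_cancel_left <| List.append_cancel_right <|
      eq_of_forall_mem_arcsOf_iff (hQ h₁).1 (hQ h₂).1 ((hQ h₁).2.1.trans (hQ h₂).2.1.symm)
        fun e => pathVec_apply_eq_iff.1 (congrFun h e)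
  have he₁ : e ∉ arcsOf P₁ := fun he => (h₁.2.2.2 e he).2 heS
  have he₂ : e ∉ arcsOf P₂ := fun he => (h₂.2.2.2 e he).2 heS
  refine hdiff (pathVec_apply_eq_iff.2 ?_)
  simp only [harcs h₁, harcs h₂, List.mem_append, he₁, he₂, or_false]


theorem isPathOn_sdiff_of_divergence {c s₁ e₁ r₂ : List V} {v w : V}
    (hnd₁ : (c ++ v :: (s₁ ++ w :: e₁)).Nodup)
    (harcs₁ : ∀ e ∈ arcsOf (c ++ v :: (s₁ ++ w :: e₁)), e ∈ A)
    (hnd₂ : (c ++ v :: r₂).Nodup) (hdiv : (s₁ ++ w :: e₁).head? ≠ r₂.head?)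
    (hs₁ : ∀ u ∈ s₁, u ∉ r₂)
    (hS : ∀ e ∈ S, e ∈ arcsOf (c ++ v :: (s₁ ++ w :: e₁)) → e ∈ arcsOf (c ++ v :: r₂)) :
    IsPathOn (A \ S) v w (v :: (s₁ ++ [w])) := by
  have hinf : v :: (s₁ ++ [w]) <:+: c ++ v :: (s₁ ++ w :: e₁) := ⟨c, e₁, by simp⟩
  refine ⟨hnd₁.sublist hinf.sublist, rfl, by rw [← List.cons_append]; exact List.getLast?_concat,
    fun e he => ⟨harcs₁ e (arcsOf_subset hinf he), fun heS => ?_⟩⟩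
  obtain ⟨u, u'⟩ := e
  have he₂ := hS _ heS (arcsOf_subset hinf he)
  rcases List.mem_cons.1 (fst_mem_of_mem_arcsOf_concat (l := v :: s₁) (by simpa using he))
    with rfl | hu
  · exact hdiv <| (head?_eq_of_mem_arcsOf hnd₁ (arcsOf_subset hinf he)).trans
      (head?_eq_of_mem_arcsOf hnd₂ he₂).symm
  · have hvu : v ∉ s₁ ++ w :: e₁ :=
      (List.nodup_cons.1 (hnd₁.sublist (List.sublist_append_right _ _))).1
    rcases List.mem_append.1 (fst_mem_of_mem_arcsOf he₂) with hc | hu₂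
    · exact List.disjoint_of_nodup_append hnd₁ hc (by simp [hu])
    rcases List.mem_cons.1 hu₂ with rfl | hu₂
    exacts [hvu (List.mem_append_left _ hu), hs₁ u hu hu₂]

theorem IsAcyclicDigraph.exists_isPathOn_sdiff_of_ne [DecidableEq V] (hA : IsAcyclicDigraph A)
    {P₁ P₂ : List V}
    (h₁ : IsPathOn A s t P₁) (h₂ : IsPathOn A s t P₂) (hne : P₁ ≠ P₂)
    (hS : ∀ e ∈ S, (e ∈ arcsOf P₁ ↔ e ∈ arcsOf P₂)) :
    ∃ (v w : V) (l₁ l₂ : List V),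
      IsPathOn (A \ S) v w l₁ ∧ IsPathOn (A \ S) v w l₂ ∧ l₁ ≠ l₂ ∧
        ∀ u, u ∈ l₁ → u ∈ l₂ → u = v ∨ u = w := by
  obtain ⟨hnd₁, hs₁, ht₁, harcs₁⟩ := h₁
  obtain ⟨hnd₂, hs₂, ht₂, harcs₂⟩ := h₂
  obtain ⟨c, v, r₁, r₂, rfl, rfl, hdiv⟩ := exists_common_prefix_of_ne hne (hs₁.trans hs₂.symm)
  have hv₁ : v ∉ r₁ := (List.nodup_cons.1 (hnd₁.sublist (List.sublist_append_right _ _))).1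
  have hv₂ : v ∉ r₂ := (List.nodup_cons.1 (hnd₂.sublist (List.sublist_append_right _ _))).1
  obtain ⟨s₁, w, e₁, rfl, hw, hfirst₁⟩ := exists_first_mem
    ⟨t, mem_of_getLast?_eq_of_head?_ne ht₁ ht₂ hv₂ hdiv,
      mem_of_getLast?_eq_of_head?_ne ht₂ ht₁ hv₁ (Ne.symm hdiv)⟩
  obtain ⟨s₂, e₂, rfl⟩ := List.append_of_mem hw
  have hfirst₂ : ∀ u ∈ s₂, u ∉ s₁ ++ w :: e₁ := by
    intro u hu hu₁
    rcases List.mem_append.1 hu₁ with hu₁ | hu₁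
    · exact hfirst₁ u hu₁ (List.mem_append_left _ hu)
    have hwu : Reaches A w u := reaches_of_head?_eq
      (fun e he => harcs₁ e (arcsOf_subset ⟨c ++ v :: s₁, [], by simp⟩ he)) rfl hu₁
    have huw : Reaches A u w := reaches_of_getLast?_eq
      (fun e he => harcs₂ e (arcsOf_subset ⟨c ++ [v], e₂, by simp⟩ he)) List.getLast?_concat
      (List.mem_append_left _ hu)
    obtain rfl := hA.eq_of_reaches huw hwu
    exact List.disjoint_of_nodup_append (hnd₂.sublist (List.sublist_append_right _ _)).of_cons
      hu List.mem_cons_self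
  refine ⟨v, w, _, _,
    isPathOn_sdiff_of_divergence hnd₁ harcs₁ hnd₂ hdiv hfirst₁ fun e he => (hS e he).1,
    isPathOn_sdiff_of_divergence hnd₂ harcs₂ hnd₁ (Ne.symm hdiv) hfirst₂ fun e he => (hS e he).2,
    fun h => hdiv ?_, fun u hu₁ hu₂ => ?_⟩
  · obtain rfl : s₁ = s₂ := List.append_cancel_right (List.cons_injective h)
    cases s₁ <;> rfl
  · simp only [List.mem_cons, List.mem_append, List.not_mem_nil, or_false] at hu₁ hu₂
    rcases hu₁ with rfl | hu₁ | rfl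
    · exact .inl rfl
    · rcases hu₂ with rfl | hu₂ | rfl
      · exact absurd (List.mem_append_left _ hu₁) hv₁
      · exact absurd (List.mem_append_left _ hu₂) (hfirst₁ u hu₁)
      · exact .inr rfl
    · exact .inr rfl

end Paths

theorem stmt8_general {V : Type*} [DecidableEq V] (A : Set (V × V)) (s t : V)
    (hacyc : IsAcyclicDigraph A)
    (hcover : ∀ v : V, ∃ l, IsPathOn A s t l ∧ v ∈ l)
    (S : Set (V × V)) :
    Identifying (XPath A s t) S ↔
      ¬ ∃ (v w : V) (l₁ l₂ : List V),
          IsPathOn (A \ S) v w l₁ ∧ IsPathOn (A \ S) v w l₂ ∧ l₁ ≠ l₂ ∧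
          ∀ u, u ∈ l₁ → u ∈ l₂ → u = v ∨ u = w := by
  constructor
  · rintro hid ⟨v, w, l₁, l₂, h₁, h₂, hne, -⟩
    exact hacyc.not_identifying_of_isPathOn_sdiff hcover h₁ h₂ hne hid
  · rintro hno x ⟨P₁, h₁, rfl⟩ y ⟨P₂, h₂, rfl⟩ hxy
    by_contra! hagree
    exact hno <| hacyc.exists_isPathOn_sdiff_of_ne h₁ h₂ (fun h => hxy (h ▸ rfl))
      fun e he => pathVec_apply_eq_iff.1 (hagree e he)

/-- Let `G` be a directed acyclic graph with arc set `A` in which every node lies on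
some `s`-`t`-path.  Then `S ⊆ A` is identifying for the `s`-`t`-paths if and only if
there is no pair of nodes `v, w` admitting two distinct internally node-disjoint
`v`-`w`-paths in the subgraph with arc set `A \ S`. -/
theorem stmt8 {V : Type*} [Fintype V] [DecidableEq V] (A : Set (V × V)) (s t : V)
    (hacyc : IsAcyclicDigraph A)
    (hcover : ∀ v : V, ∃ l, IsPathOn A s t l ∧ v ∈ l)
    (S : Set (V × V)) (hS : S ⊆ A) :
    Identifying (XPath A s t) S ↔
      ¬ ∃ (v w : V) (l₁ l₂ : List V),
          IsPathOn (A \ S) v w l₁ ∧ IsPathOn (A \ S) v w l₂ ∧ l₁ ≠ l₂ ∧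
          ∀ u, u ∈ l₁ → u ∈ l₂ → u = v ∨ u = w :=
  stmt8_general A s t hacyc hcover S
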